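/- Let S be a compact invariant set for the multiflow Φ of a differential inclusion and let A be an attractor in S. Then the dual repeller R := {x ∈ S | ω_S(x) ⊄ A} is a repeller in S, i.e. there exists a neighborhood U* of R in S with α_S(U*) = R. -/

import Mathlib

open Set MeasureTheory Filter Topology

namespace DIncl

variable {E : Type*} [NormedAddCommGroup E] [NormedSpace ℝ E] [CompleteSpace E]

/-- Upper semicontinuity of a set-valued map on a set `D`. -/
def USCOn {α β : Type*} [PseudoMetricSpace α] [PseudoMetricSpace β]
    (F : α → Set β) (D : Set α) : Prop :=
  ∀ x ∈ D, ∀ ε > 0, ∃ δ > 0, ∀ y ∈ D, dist y x < δ →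
    F y ⊆ {z | ∃ w ∈ F x, dist z w < ε}

/-- The Filippov conditions on `D`: upper semicontinuous with compact, convex,
nonempty values. -/
def FilippovOn {α : Type*} [PseudoMetricSpace α] (F : α → Set E) (D : Set α) : Prop :=
  USCOn F D ∧ ∀ x ∈ D, IsCompact (F x) ∧ Convex ℝ (F x) ∧ (F x).Nonempty

/-- `x` is a solution of the differential inclusion `ẋ ∈ F x` on the set `I`,
staying in `X`: an absolutely continuous function whose a.e. derivative lies in
`F (x t)`, encoded via the integral representation `x b = x a + ∫_a^b v`. -/
def IsSolOn (F : E → Set E) (X : Set E) (x : ℝ → E) (I : Set ℝ) : Prop :=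
  (∀ t ∈ I, x t ∈ X) ∧
  ∃ v : ℝ → E,
    (∀ a ∈ I, ∀ b ∈ I, IntervalIntegrable v volume a b) ∧
    (∀ᵐ t ∂volume, t ∈ I → v t ∈ F (x t)) ∧
    (∀ a ∈ I, ∀ b ∈ I, x b = x a + ∫ t in a..b, v t)

/-- The solution multiflow `Φ(T,a)` of `ẋ ∈ F x` in `X`. -/
def mflow (F : E → Set E) (X : Set E) (T : ℝ) (a : E) : Set E :=
  {b | ∃ x : ℝ → E, IsSolOn F X x (Icc 0 T) ∧ x 0 = a ∧ x T = b}

/-- `Φ(I,U)`. -/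
def mflowSet (F : E → Set E) (X : Set E) (I : Set ℝ) (U : Set E) : Set E :=
  ⋃ t ∈ I, ⋃ a ∈ U, mflow F X t a

/-- Maximal invariant subset of `U`: points admitting a full-time orbit in `U`. -/
def maxInv (F : E → Set E) (U : Set E) : Set E :=
  {x | ∃ ψ : ℝ → E, IsSolOn F U ψ univ ∧ ψ 0 = x}

/-- `S` is invariant: every point of `S` has a full-time orbit staying in `S`. -/
def IsInvSet (F : E → Set E) (S : Set E) : Prop := S ⊆ maxInv F S

/-- The restricted omega-limit set `ω_S(U)` (with `Φ^S = mflow F S`). -/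
def omegaS (F : E → Set E) (S U : Set E) : Set E :=
  ⋂ t ∈ Ici (0:ℝ), closure (mflowSet F S (Ici t) U)

/-- `(Φ^S)^*(I,U)` for the dual (backward-time) multiflow. -/
def mflowDualSet (F : E → Set E) (S : Set E) (I : Set ℝ) (U : Set E) : Set E :=
  ⋃ t ∈ I, ⋃ a ∈ U, {b | a ∈ mflow F S (-t) b}

/-- The restricted alpha-limit set `α_S(U)`. -/
def alphaS (F : E → Set E) (S U : Set E) : Set E :=
  ⋂ t ∈ Iio (0:ℝ), closure (mflowDualSet F S (Iic t) U)

/-- The interior of `U` relative to `X`. -/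
def relInt (X U : Set E) : Set E := {x ∈ X | U ∈ nhdsWithin x X}

/-- The closure of `U` relative to `X`. -/
def relCl (X U : Set E) : Set E := closure U ∩ X

/-- `A` is an attractor in `S`: the `ω_S`-limit set of a neighborhood of itself in `S`. -/
def IsAttractorIn (F : E → Set E) (S A : Set E) : Prop :=
  A ⊆ S ∧ ∃ U, A ⊆ relInt S U ∧ U ⊆ S ∧ omegaS F S U = A

/-- `R` is a repeller in `S`: the `α_S`-limit set of a neighborhood of itself in `S`. -/
def IsRepellerIn (F : E → Set E) (S R : Set E) : Prop :=
  R ⊆ S ∧ ∃ U, R ⊆ relInt S U ∧ U ⊆ S ∧ alphaS F S U = R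

/-- The dual repeller of an attractor `A` in `S`. -/
def dualRep (F : E → Set E) (S A : Set E) : Set E :=
  {x ∈ S | ¬ omegaS F S {x} ⊆ A}

/-- The dual attractor of a repeller `R` in `S`. -/
def dualAtt (F : E → Set E) (S R : Set E) : Set E :=
  {x ∈ S | ¬ alphaS F S {x} ⊆ R}

end DIncl

open DIncl Set MeasureTheory Filter Topology

/-!
Let `U ⊆ S` be a neighbourhood of `A` with `ω_S(U) = A`, and `Q` an open set with `A ⊆ Q` and
`Q ∩ S ⊆ U`. By compactness a forward tail `W = Φ^S([T,∞), U)` has its closure inside `Q`, and a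
point of `S` is attracted to `A` iff it is mapped into `Q` at some time. The neighbourhood of the
dual repeller `R` is `S \ W`: `R` misses `closure W`, and a point of `R` meets `S \ W` at every
positive time, so `R ⊆ α_S(S \ W)`. Conversely, if `y` is attracted, then `Φ^S(τ, y) ⊆ Q` for some
`τ`; since `Φ^S(τ, ·)` is upper semicontinuous, the same holds near `y`, so points near `y` lie in
`W` at all times `≥ τ + T`, and `y ∉ α_S(S \ W)`.

Upper semicontinuity is the convergence theorem for the Filippov inclusion: a pointwise limit of
solutions is uniformly Lipschitz, and its difference quotients are limits of averages of
velocities, which by upper semicontinuity of `F` stay in a small closed convex neighbourhood of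
`F (Z t)`.
-/

open scoped NNReal

theorem LipschitzWith.intervalIntegrable_deriv {E : Type*} [NormedAddCommGroup E]
    [NormedSpace ℝ E] [CompleteSpace E] {f : ℝ → E} {K : ℝ≥0} (hf : LipschitzWith K f) (a b : ℝ) :
    IntervalIntegrable (deriv f) volume a b :=
  (intervalIntegrable_const (c := (K : ℝ))).mono_fun
    (stronglyMeasurable_deriv f).aestronglyMeasurable
    (ae_of_all _ fun _ => by simpa using norm_deriv_le_of_lipschitz hf)

theorem LipschitzWith.integral_deriv_eq_sub {E : Type*} [NormedAddCommGroup E] [NormedSpace ℝ E]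
    [FiniteDimensional ℝ E] {f : ℝ → E} {K : ℝ≥0} (hf : LipschitzWith K f) (a b : ℝ) :
    ∫ t in a..b, deriv f t = f b - f a := by
  refine (SeparatingDual.eq_iff_forall_dual_eq (R := ℝ)).2 fun φ => ?_
  rw [← φ.intervalIntegral_comp_comm (hf.intervalIntegrable_deriv a b), map_sub]
  have hφf := (φ.lipschitz.comp hf).lipschitzOnWith.absolutelyContinuousOnInterval (a := a) (b := b)
  refine (intervalIntegral.integral_congr_ae ?_).trans hφf.integral_deriv_eq_sub
  filter_upwards [hf.ae_differentiableAt_real] with t ht _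
  exact ((φ.hasFDerivAt.comp_hasDerivAt t ht.hasDerivAt).deriv).symm

theorem slope_mem_of_ae_mem {E : Type*} [NormedAddCommGroup E] [NormedSpace ℝ E] [CompleteSpace E]
    {x v : ℝ → E} {a b : ℝ} {D : Set E} (hab : a < b) (hx : x b = x a + ∫ t in a..b, v t)
    (hv : IntegrableOn v (Ioc a b)) (hD : Convex ℝ D) (hDc : IsClosed D)
    (hvD : ∀ᵐ t ∂volume.restrict (Ioc a b), v t ∈ D) : slope x a b ∈ D := by
  have havg := hD.set_average_mem hDc (by simpa using hab) (by simp) hvD hv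
  rwa [← uIoc_of_le hab.le, interval_average_eq, eq_sub_of_add_eq' hx.symm, ← slope_def_module]
    at havg

namespace DIncl

theorem exists_isOpen_inter_subset_of_subset_relInt {E : Type*} [NormedAddCommGroup E]
    {A S U : Set E} (h : A ⊆ relInt S U) : ∃ Q, IsOpen Q ∧ A ⊆ Q ∧ Q ∩ S ⊆ U := by
  refine ⟨interior (Sᶜ ∪ U), isOpen_interior, fun x hx => ?_,
    fun x ⟨hxQ, hxS⟩ => (interior_subset hxQ).resolve_left (not_not_intro hxS)⟩
  rw [mem_interior_iff_mem_nhds]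
  filter_upwards [mem_nhdsWithin_iff_eventually.1 (h hx).2] with y hy
  exact or_iff_not_imp_left.2 fun hyS => hy (not_not.1 hyS)

variable {E : Type*} [NormedAddCommGroup E] [NormedSpace ℝ E] {F : E → Set E} {S : Set E}

theorem FilippovOn.mono {X : Set E} (hF : FilippovOn F X) (hSX : S ⊆ X) : FilippovOn F S :=
  ⟨fun x hx ε hε => (hF.1 x (hSX hx) ε hε).imp fun _ ⟨hδ, h⟩ => ⟨hδ, fun y hy => h y (hSX hy)⟩,
    fun x hx => hF.2 x (hSX hx)⟩

theorem FilippovOn.exists_norm_le (hF : FilippovOn F S) (hS : IsCompact S) :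
    ∃ M : ℝ≥0, ∀ x ∈ S, ∀ v ∈ F x, ‖v‖ ≤ M := by
  refine hS.induction_on (p := fun s => ∃ M : ℝ≥0, ∀ x ∈ s, ∀ v ∈ F x, ‖v‖ ≤ M)
    ⟨0, by simp⟩ (fun s t hst ⟨M, hM⟩ => ⟨M, fun x hx => hM x (hst hx)⟩)
    (fun s t ⟨M, hM⟩ ⟨N, hN⟩ => ⟨max M N, ?_⟩) fun x hx => ?_
  · rintro y (hy | hy) v hv
    exacts [(hM y hy v hv).trans (by simp), (hN y hy v hv).trans (by simp)]
  · obtain ⟨δ, hδ, husc⟩ := hF.1 x hx 1 one_pos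
    obtain ⟨R, hR⟩ := (hF.2 x hx).1.isBounded.exists_norm_le
    refine ⟨S ∩ Metric.ball x δ, inter_mem_nhdsWithin S (Metric.ball_mem_nhds x hδ),
      (R + 1).toNNReal, fun y hy v hv => ?_⟩
    obtain ⟨w, hw, hvw⟩ := husc y hy.1 hy.2 hv
    calc ‖v‖ ≤ ‖w‖ + ‖v - w‖ := norm_le_norm_add_norm_sub' v w
      _ ≤ R + 1 := add_le_add (hR w hw) (dist_eq_norm v w ▸ hvw.le)
      _ ≤ (R + 1).toNNReal := Real.le_coe_toNNReal _

theorem IsSolOn.mono {x : ℝ → E} {I J : Set ℝ} (hx : IsSolOn F S x I) (hJI : J ⊆ I) :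
    IsSolOn F S x J := by
  obtain ⟨hxS, v, hvi, hvF, hxv⟩ := hx
  exact ⟨fun t ht => hxS t (hJI ht), v, fun a ha b hb => hvi a (hJI ha) b (hJI hb),
    hvF.mono fun t ht htJ => ht (hJI htJ), fun a ha b hb => hxv a (hJI ha) b (hJI hb)⟩

theorem IsSolOn.comp_const_add {x : ℝ → E} {I : Set ℝ} (hx : IsSolOn F S x I) (s : ℝ) :
    IsSolOn F S (fun t => x (s + t)) ((s + ·) ⁻¹' I) := by
  obtain ⟨hxS, v, hvi, hvF, hxv⟩ := hx
  refine ⟨fun t ht => hxS _ ht, fun t => v (s + t), fun a ha b hb => ?_, ?_, fun a ha b hb => ?_⟩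
  · simpa using (hvi _ ha _ hb).comp_add_left s
  · exact (measurePreserving_add_left volume s).quasiMeasurePreserving.ae hvF
  · dsimp only
    rw [hxv _ ha _ hb, intervalIntegral.integral_comp_add_left v s]

theorem IsSolOn.lipschitzOnWith {x : ℝ → E} {I : Set ℝ} {M : ℝ≥0} (hx : IsSolOn F S x I)
    (hI : I.OrdConnected) (hM : ∀ y ∈ S, ∀ v ∈ F y, ‖v‖ ≤ M) : LipschitzOnWith M x I := by
  obtain ⟨hxS, v, -, hvF, hxv⟩ := hx
  refine LipschitzOnWith.of_dist_le_mul fun t ht s hs => ?_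
  have hsub : uIoc s t ⊆ I := uIoc_subset_uIcc.trans (hI.uIcc_subset hs ht)
  rw [dist_eq_norm, hxv s hs t ht, add_sub_cancel_left, Real.dist_eq]
  refine intervalIntegral.norm_integral_le_of_norm_le_const_ae ?_
  filter_upwards [hvF] with u hu hus using hM _ (hxS u (hsub hus)) _ (hu (hsub hus))

theorem mflow_subset {t : ℝ} (ht : 0 ≤ t) (a : E) : mflow F S t a ⊆ S := by
  rintro b ⟨x, hx, -, rfl⟩
  exact hx.1 t ⟨ht, le_rfl⟩

theorem mem_of_mem_mflow {t : ℝ} {a b : E} (ht : 0 ≤ t) (h : b ∈ mflow F S t a) : a ∈ S := by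
  obtain ⟨x, hx, rfl, -⟩ := h
  exact hx.1 0 ⟨le_rfl, ht⟩

theorem mflow_zero_subset (a : E) : mflow F S 0 a ⊆ {a} := by
  rintro b ⟨x, -, rfl, rfl⟩
  rfl

theorem mflow_split {r s : ℝ} {a b : E} (h : b ∈ mflow F S r a) (hs : 0 ≤ s) (hsr : s ≤ r) :
    ∃ m ∈ mflow F S s a, b ∈ mflow F S (r - s) m := by
  obtain ⟨x, hx, rfl, rfl⟩ := h
  refine ⟨x s, ⟨x, hx.mono (Icc_subset_Icc le_rfl hsr), rfl, rfl⟩,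
    fun t => x (s + t), (hx.comp_const_add s).mono fun t ht => ?_, by simp, by simp⟩
  simp only [mem_preimage, mem_Icc] at ht ⊢
  constructor <;> linarith [ht.1, ht.2]

theorem mflow_subset_mflowSet {I : Set ℝ} {U : Set E} {r : ℝ} {a : E} (hr : r ∈ I)
    (ha : a ∈ U) : mflow F S r a ⊆ mflowSet F S I U :=
  fun _ hb => mem_iUnion₂.2 ⟨r, hr, mem_iUnion₂.2 ⟨a, ha, hb⟩⟩

theorem mflowSet_Ici_subset {t : ℝ} (ht : 0 ≤ t) (U : Set E) : mflowSet F S (Ici t) U ⊆ S :=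
  iUnion₂_subset fun _ hr => iUnion₂_subset fun a _ => mflow_subset (ht.trans hr) a

theorem mflow_subset_mflowSet_of_mflow_subset {U : Set E} {x : E} {τ T r : ℝ} (hτ : 0 ≤ τ)
    (hT : 0 ≤ T) (h : mflow F S τ x ⊆ U) (hr : τ + T ≤ r) :
    mflow F S r x ⊆ mflowSet F S (Ici T) U := by
  intro b hb
  obtain ⟨m, hm, hbm⟩ := mflow_split hb hτ (by linarith)
  exact mflow_subset_mflowSet (show T ≤ r - τ by linarith) (h hm) hbm

theorem IsSolOn.slope_mem_cthickening [CompleteSpace E] {z : ℝ → E} {I : Set ℝ} {M : ℝ≥0}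
    {p : E} {δ ε a b : ℝ} (hz : IsSolOn F S z I) (hI : I.OrdConnected)
    (hM : ∀ y ∈ S, ∀ v ∈ F y, ‖v‖ ≤ M) (hFp : Convex ℝ (F p))
    (husc : ∀ y ∈ S, dist y p < δ → F y ⊆ {w | ∃ u ∈ F p, dist w u < ε})
    (ha : a ∈ I) (hb : b ∈ I) (hab : a < b) (hδ : dist (z a) p + M * (b - a) < δ) :
    slope z a b ∈ Metric.cthickening ε (F p) := by
  have hlip := hz.lipschitzOnWith hI hM
  obtain ⟨hzS, v, hvi, hvF, hzv⟩ := hz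
  have hsub : Ioc a b ⊆ I := Ioc_subset_Icc_self.trans (hI.out ha hb)
  refine slope_mem_of_ae_mem hab (hzv a ha b hb) (hvi a ha b hb).1 (hFp.cthickening ε)
    Metric.isClosed_cthickening ?_
  filter_upwards [ae_restrict_of_ae hvF, ae_restrict_mem measurableSet_Ioc] with s hs hsab
  have hdist : dist (z s) p < δ := by
    have hzs : dist (z s) (z a) ≤ M * (b - a) := by
      refine (hlip.dist_le_mul s (hsub hsab) a ha).trans ?_
      rw [Real.dist_eq, abs_of_pos (sub_pos.2 hsab.1)]
      gcongr
      exact hsab.2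
    linarith [dist_triangle (z s) (z a) p]
  obtain ⟨w, hw, hvw⟩ := husc _ (hzS s (hsub hsab)) hdist (hs (hsub hsab))
  exact Metric.mem_cthickening_of_dist_le _ _ _ _ hw hvw.le

theorem mem_of_tendsto_of_hasDerivWithinAt [CompleteSpace E] {ι : Type*} {l : Filter ι}
    [l.NeBot] {z : ι → ℝ → E} {Z : ℝ → E} {M : ℝ≥0} {σ t : ℝ} {f' : E}
    (hF : FilippovOn F S) (hM : ∀ y ∈ S, ∀ v ∈ F y, ‖v‖ ≤ M)
    (hz : ∀ i, IsSolOn F S (z i) (Icc 0 σ))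
    (hZ : ∀ s ∈ Icc 0 σ, Tendsto (fun i => z i s) l (𝓝 (Z s)))
    (hZt : Z t ∈ S) (ht : t ∈ Ico 0 σ) (hd : HasDerivWithinAt Z f' (Ioi t) t) :
    f' ∈ F (Z t) := by
  rw [← (hF.2 _ hZt).1.isClosed.closure_eq, Metric.closure_eq_iInter_cthickening, mem_iInter₂]
  intro ε hε
  obtain ⟨δ, hδ, husc⟩ := hF.1 _ hZt ε hε
  have hsmall : ∀ᶠ u in 𝓝[>] t, (M : ℝ) * (u - t) < δ / 2 := by
    have h : Tendsto (fun u => (M : ℝ) * (u - t)) (𝓝 t) (𝓝 ((M : ℝ) * (t - t))) :=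
      (continuous_const.mul (continuous_id.sub continuous_const)).tendsto t
    rw [sub_self, mul_zero] at h
    exact nhdsWithin_le_nhds (h.eventually (gt_mem_nhds (half_pos hδ)))
  refine Metric.isClosed_cthickening.mem_of_tendsto
    ((hasDerivWithinAt_iff_tendsto_slope' self_notMem_Ioi).1 hd) ?_
  have htI : t ∈ Icc 0 σ := Ico_subset_Icc_self ht
  filter_upwards [Ioc_mem_nhdsGT ht.2, hsmall] with u hu hMu
  have huI : u ∈ Icc 0 σ := ⟨ht.1.trans hu.1.le, hu.2⟩
  have hslope : Tendsto (fun i => slope (z i) t u) l (𝓝 (slope Z t u)) := by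
    simpa only [slope_def_module] using ((hZ u huI).sub (hZ t htI)).const_smul (u - t)⁻¹
  refine Metric.isClosed_cthickening.mem_of_tendsto hslope ?_
  filter_upwards [(hZ t htI).eventually (Metric.ball_mem_nhds _ (half_pos hδ))] with i hi
  exact (hz i).slope_mem_cthickening ordConnected_Icc hM (hF.2 _ hZt).2.1 husc htI huI hu.1
    (by linarith)

theorem isSolOn_of_tendsto [FiniteDimensional ℝ E] {ι : Type*} {l : Filter ι} [l.NeBot]
    {z : ι → ℝ → E} {Z : ℝ → E} {σ : ℝ} (hS : IsCompact S) (hF : FilippovOn F S) (hσ : 0 ≤ σ)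
    (hz : ∀ i, IsSolOn F S (z i) (Icc 0 σ))
    (hZ : ∀ t ∈ Icc 0 σ, Tendsto (fun i => z i t) l (𝓝 (Z t))) :
    IsSolOn F S Z (Icc 0 σ) := by
  obtain ⟨M, hM⟩ := hF.exists_norm_le hS
  have hZS : ∀ t ∈ Icc 0 σ, Z t ∈ S := fun t ht =>
    hS.isClosed.mem_of_tendsto (hZ t ht) (Eventually.of_forall fun i => (hz i).1 t ht)
  have hZlip : LipschitzOnWith M Z (Icc 0 σ) :=
    LipschitzOnWith.of_dist_le_mul fun s hs t ht => le_of_tendsto ((hZ s hs).dist (hZ t ht))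
      (Eventually.of_forall fun i =>
        ((hz i).lipschitzOnWith ordConnected_Icc hM).dist_le_mul s hs t ht)
  -- `Z` is arbitrary outside `[0, σ]`; its clamped version is globally Lipschitz.
  set Z' : ℝ → E := fun t => Z (projIcc 0 σ hσ t)
  have hZ'lip : LipschitzWith M Z' := by
    have h := hZlip.to_restrict.comp (LipschitzWith.projIcc hσ)
    rwa [mul_one] at h
  have hZZ' : EqOn Z Z' (Icc 0 σ) := fun t ht => by simp [Z', projIcc_of_mem hσ ht]
  refine ⟨hZS, deriv Z', fun a _ b _ => hZ'lip.intervalIntegrable_deriv a b, ?_,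
    fun a ha b hb => ?_⟩
  · filter_upwards [hZ'lip.ae_differentiableAt_real, compl_mem_ae_iff.2 (measure_singleton σ)]
      with t hd hne ht
    have htσ : t < σ := lt_of_le_of_ne ht.2 hne
    refine mem_of_tendsto_of_hasDerivWithinAt hF hM hz hZ (hZS t ht) ⟨ht.1, htσ⟩ ?_
    exact hd.hasDerivAt.hasDerivWithinAt.congr_of_eventuallyEq
      (mem_of_superset (Ioc_mem_nhdsGT htσ) fun u hu => hZZ' ⟨ht.1.trans hu.1.le, hu.2⟩)
      (hZZ' ht)
  · rw [hZZ' ha, hZZ' hb, hZ'lip.integral_deriv_eq_sub, add_sub_cancel]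

theorem mem_mflow_of_tendsto [FiniteDimensional ℝ E] {ι : Type*} {l : Ultrafilter ι}
    {c e : ι → E} {b p : E} {σ : ℝ} (hS : IsCompact S) (hF : FilippovOn F S) (hσ : 0 ≤ σ)
    (hc : Tendsto c l (𝓝 b)) (he : Tendsto e l (𝓝 p)) (hm : ∀ i, e i ∈ mflow F S σ (c i)) :
    p ∈ mflow F S σ b := by
  choose z hz hz0 hzσ using hm
  have hlim : ∀ t ∈ Icc 0 σ, ∃ q, Tendsto (fun i => z i t) l (𝓝 q) := fun t ht =>
    let ⟨q, _, hq⟩ := hS.ultrafilter_le_nhds (l.map fun i => z i t)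
      (le_principal_iff.2 (Ultrafilter.mem_map.2 (univ_mem' fun i => (hz i).1 t ht)))
    ⟨q, hq⟩
  choose! Z hZ using hlim
  refine ⟨Z, isSolOn_of_tendsto hS hF hσ hz hZ, ?_, ?_⟩
  · exact tendsto_nhds_unique (hZ 0 ⟨le_rfl, hσ⟩) (by simpa [hz0] using hc)
  · exact tendsto_nhds_unique (hZ σ ⟨hσ, le_rfl⟩) (by simpa [hzσ] using he)

theorem eventually_mflow_subset [FiniteDimensional ℝ E] {G : Set E} {y : E} {σ : ℝ}
    (hS : IsCompact S) (hF : FilippovOn F S) (hσ : 0 ≤ σ) (hG : IsOpen G)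
    (h : mflow F S σ y ⊆ G) : ∀ᶠ q in 𝓝 y, mflow F S σ q ⊆ G := by
  by_contra hcon
  obtain ⟨q, hq, hqG⟩ := exists_seq_forall_of_frequently (not_eventually.1 hcon)
  choose e he heG using fun k => not_subset.1 (hqG k)
  set l := Ultrafilter.of (atTop : Filter ℕ)
  have heS : ∀ k, e k ∈ S := fun k => mflow_subset hσ _ (he k)
  obtain ⟨p, -, hp⟩ := hS.ultrafilter_le_nhds (l.map e)
    (le_principal_iff.2 (Ultrafilter.mem_map.2 (univ_mem' heS)))
  exact hG.isClosed_compl.mem_of_tendsto hp (Eventually.of_forall heG)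
    (h (mem_mflow_of_tendsto hS hF hσ (hq.mono_left (Ultrafilter.of_le _)) hp he))

theorem omegaS_singleton_subset {U : Set E} {x : E} {τ : ℝ} (hτ : 0 ≤ τ)
    (h : mflow F S τ x ⊆ U) : omegaS F S {x} ⊆ omegaS F S U := by
  refine iInter₂_mono' fun t ht =>
    ⟨t + τ, mem_Ici.2 (by linarith [mem_Ici.1 ht]), closure_mono ?_⟩
  refine iUnion₂_subset fun r hr => iUnion₂_subset fun a ha => ?_
  rw [mem_singleton_iff.1 ha]
  exact mflow_subset_mflowSet_of_mflow_subset hτ ht h (by linarith [mem_Ici.1 hr])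

theorem exists_closure_mflowSet_subset {U Q : Set E} (hS : IsCompact S) (hQ : IsOpen Q)
    (h : omegaS F S U ⊆ Q) : ∃ T ≥ 0, closure (mflowSet F S (Ici T) U) ⊆ Q := by
  set C : Ici (0 : ℝ) → Set E := fun t => closure (mflowSet F S (Ici (t : ℝ)) U)
  have hCS : ∀ t, C t ⊆ S := fun t => closure_minimal (mflowSet_Ici_subset t.2 U) hS.isClosed
  have hCω : ⋂ t, C t ⊆ omegaS F S U := fun x hx =>
    mem_iInter₂.2 fun t ht => mem_iInter.1 hx ⟨t, ht⟩
  have hC : Antitone C := fun s t hst => closure_mono <|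
    biUnion_subset_biUnion_left (Ici_subset_Ici.2 (Subtype.coe_le_coe.2 hst))
  obtain ⟨t, ht⟩ := hS.elim_directed_family_closed (fun t => C t \ Q)
    (fun t => isClosed_closure.sdiff hQ)
    (eq_empty_iff_forall_notMem.2 fun x ⟨_, hx⟩ =>
      (mem_iInter.1 hx ⟨0, self_mem_Ici⟩).2 (h (hCω (iInter_mono (fun _ => sdiff_subset) hx))))
    (fun s t => ⟨max s t, sdiff_subset_sdiff_left (hC le_sup_left),
      sdiff_subset_sdiff_left (hC le_sup_right)⟩)
  exact ⟨t, t.2, fun x hx => by_contra fun hxQ => ht.subset ⟨hCS t hx, hx, hxQ⟩⟩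

theorem omegaS_singleton_subset_iff {U Q : Set E} {x : E} (hS : IsCompact S) (hQ : IsOpen Q)
    (hωQ : omegaS F S U ⊆ Q) (hQU : Q ∩ S ⊆ U) :
    omegaS F S {x} ⊆ omegaS F S U ↔ ∃ τ ≥ 0, mflow F S τ x ⊆ Q := by
  refine ⟨fun h => ?_, fun ⟨τ, hτ, hτQ⟩ => ?_⟩
  · obtain ⟨τ, hτ, hτQ⟩ := exists_closure_mflowSet_subset hS hQ (h.trans hωQ)
    exact ⟨τ, hτ, (mflow_subset_mflowSet self_mem_Ici (mem_singleton x)).trans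
      (subset_closure.trans hτQ)⟩
  · exact omegaS_singleton_subset hτ fun b hb => hQU ⟨hτQ hb, mflow_subset hτ x hb⟩

theorem alphaS_subset (hS : IsClosed S) (V : Set E) : alphaS F S V ⊆ S := by
  refine (iInter₂_subset (-1 : ℝ) (by norm_num)).trans (closure_minimal ?_ hS)
  refine iUnion₂_subset fun t ht => iUnion₂_subset fun a _ b hb => mem_of_mem_mflow ?_ hb
  linarith [mem_Iic.1 ht]

theorem mem_alphaS_of_forall_pos {V : Set E} {x : E}
    (h : ∀ r > 0, (mflow F S r x ∩ V).Nonempty) : x ∈ alphaS F S V := by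
  refine mem_iInter₂.2 fun t ht => subset_closure ?_
  obtain ⟨a, hax, haV⟩ := h (-t) (neg_pos.2 ht)
  exact mem_iUnion₂.2 ⟨t, self_mem_Iic, mem_iUnion₂.2 ⟨a, haV, hax⟩⟩

theorem notMem_alphaS_of_eventually_disjoint {V : Set E} {y : E} {t₀ : ℝ}
    (h : ∀ᶠ q in 𝓝 y, ∀ r ≥ t₀, Disjoint (mflow F S r q) V) : y ∉ alphaS F S V := by
  intro hy
  obtain ⟨q, hq, hqα⟩ := mem_closure_iff_nhds.1
    (mem_iInter₂.1 hy (min (-t₀) (-1)) (min_lt_of_right_lt (by norm_num : (-1 : ℝ) < 0))) _ h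
  simp only [mflowDualSet, mem_iUnion] at hqα
  obtain ⟨s, hs, a, haV, haq⟩ := hqα
  exact disjoint_left.1 (hq (-s) (by linarith [min_le_left (-t₀) (-1), mem_Iic.1 hs])) haq haV

end DIncl

theorem dualRep_is_repeller_general {n : ℕ} (X : Set (Fin n → ℝ))
    (F : (Fin n → ℝ) → Set (Fin n → ℝ)) (hF : FilippovOn F X)
    (S : Set (Fin n → ℝ)) (hSX : S ⊆ X) (hS : IsCompact S)
    (A : Set (Fin n → ℝ)) (hA : IsAttractorIn F S A) :
    ∃ Ustar : Set (Fin n → ℝ), dualRep F S A ⊆ relInt S Ustar ∧ Ustar ⊆ S ∧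
      alphaS F S Ustar = dualRep F S A := by
  obtain ⟨-, U, hAU, -, rfl⟩ := hA
  obtain ⟨Q, hQ, hωQ, hQU⟩ := exists_isOpen_inter_subset_of_subset_relInt hAU
  obtain ⟨T, hT, hWQ⟩ := exists_closure_mflowSet_subset hS hQ hωQ
  set W := mflowSet F S (Ici T) U
  have hR : ∀ x, x ∈ dualRep F S (omegaS F S U) ↔ x ∈ S ∧ ∀ τ ≥ 0, ¬ mflow F S τ x ⊆ Q := by
    simp [dualRep, omegaS_singleton_subset_iff hS hQ hωQ hQU]
  refine ⟨S \ W, fun x hx => ?_, sdiff_subset, Subset.antisymm (fun y hy => ?_) fun x hx => ?_⟩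
  · have hxW : x ∉ closure W := fun h =>
      ((hR x).1 hx).2 0 le_rfl ((mflow_zero_subset x).trans (singleton_subset_iff.2 (hWQ h)))
    exact ⟨hx.1, mem_nhdsWithin.2 ⟨(closure W)ᶜ, isClosed_closure.isOpen_compl, hxW,
      fun z ⟨hz, hzS⟩ => ⟨hzS, fun h => hz (subset_closure h)⟩⟩⟩
  · refine (hR y).2 ⟨alphaS_subset hS.isClosed _ hy, fun τ hτ hτQ =>
      notMem_alphaS_of_eventually_disjoint (t₀ := τ + T) ?_ hy⟩
    filter_upwards [eventually_mflow_subset hS (hF.mono hSX) hτ hQ hτQ] with q hq r hr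
    exact disjoint_sdiff_right.mono_left (mflow_subset_mflowSet_of_mflow_subset hτ hT
      (fun z hz => hQU ⟨hq hz, mflow_subset hτ _ hz⟩) hr)
  · refine mem_alphaS_of_forall_pos fun r hr => ?_
    by_contra hne
    refine ((hR x).1 hx).2 r hr.le fun z hz => hWQ (subset_closure ?_)
    by_contra hzW
    exact hne ⟨z, hz, mflow_subset hr.le x hz, hzW⟩

/-- The dual repeller of an attractor is a repeller. -/
theorem dualRep_is_repeller {n : ℕ} (X : Set (Fin n → ℝ)) (hX : IsCompact X)
    (F : (Fin n → ℝ) → Set (Fin n → ℝ)) (hF : FilippovOn F X)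
    (S : Set (Fin n → ℝ)) (hSX : S ⊆ X) (hS : IsCompact S) (hSinv : IsInvSet F S)
    (A : Set (Fin n → ℝ)) (hA : IsAttractorIn F S A) :
    ∃ Ustar : Set (Fin n → ℝ), dualRep F S A ⊆ relInt S Ustar ∧ Ustar ⊆ S ∧
      alphaS F S Ustar = dualRep F S A :=
  dualRep_is_repeller_general X F hF S hSX hS A hA
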